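/- For all Boolean values ℓ₁, ℓ₂, ℓ₃, the maximum over the Boolean value of α of the number of satisfied clauses among the six clauses (ℓ₁ ∨ ℓ₂), (ℓ₁ ∨ ℓ₃), (¬ℓ₂ ∨ ¬ℓ₃), (α ∨ ¬ℓ₁), (¬α ∨ ℓ₂), (¬α ∨ ℓ₃) equals 5 if ℓ₁ ∨ ℓ₂ ∨ ℓ₃ is true, and equals 4 if ℓ₁ ∨ ℓ₂ ∨ ℓ₃ is false. -/
import Mathlib


open scoped Classical

/-- A literal: a propositional variable (indexed by a natural number) or its negation. -/
structure Lit where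
  var : ℕ
  pos : Bool
deriving DecidableEq

/-- A clause is a finite set of literals. -/
abbrev Clause := Finset Lit

/-- The variables occurring in a clause. -/
def Clause.varsOf (c : Clause) : Finset ℕ := c.image Lit.var

/-- A weighted CNF: a finite set of clauses with weights in `ℕ ∪ {∞}`. -/
structure WCNF where
  clauses : Finset Clause
  weight : Clause → ℕ∞

/-- An assignment satisfies a literal. -/
def satLit (β : ℕ → Bool) (l : Lit) : Prop := β l.var = l.pos

/-- An assignment satisfies a clause if it makes some literal true. -/
def satClause (β : ℕ → Bool) (c : Clause) : Prop := ∃ l ∈ c, satLit β l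

/-- The cost of an assignment: sum of the weights of the falsified clauses. -/
noncomputable def WCNF.costA (φ : WCNF) (β : ℕ → Bool) : ℕ∞ :=
  ∑ c ∈ φ.clauses.filter (fun c => ¬ satClause β c), φ.weight c

/-- The cost of a WCNF: the minimum cost over all assignments. -/
noncomputable def WCNF.cost (φ : WCNF) : ℕ∞ := ⨅ β : ℕ → Bool, φ.costA β

/-- The variables of a set of clauses. -/
def cnfVars (C : Finset Clause) : Finset ℕ := C.biUnion Clause.varsOf

/-- The variables of a WCNF. -/
def WCNF.vars (φ : WCNF) : Finset ℕ := cnfVars φ.clauses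

/-- The primal graph of a set of clauses: vertices are the variables (all of `ℕ`),
with an edge between distinct variables occurring together in a clause. -/
def primalOf (C : Finset Clause) : SimpleGraph ℕ :=
  SimpleGraph.fromRel (fun u v => ∃ c ∈ C, u ∈ c.varsOf ∧ v ∈ c.varsOf)

/-- The incidence graph of a set of clauses: the bipartite graph on variables and
clauses joining each clause to the variables it contains. -/
def incOf (C : Finset Clause) : SimpleGraph (ℕ ⊕ Clause) :=
  SimpleGraph.fromRel (fun a b =>
    ∃ x c, a = Sum.inl x ∧ b = Sum.inr c ∧ c ∈ C ∧ x ∈ c.varsOf)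

/-- A tree decomposition of a graph `G`: a tree `TG` together with finite bags such that
every vertex occurs in some bag, every edge is covered by a bag, and for each vertex the
nodes whose bags contain it induce a nonempty connected subgraph (hence a subtree). -/
structure TreeDecomp {V T : Type} (G : SimpleGraph V) (TG : SimpleGraph T) where
  isTree : TG.IsTree
  bag : T → Finset V
  covers_vertex : ∀ v : V, ∃ t, v ∈ bag t
  covers_edge : ∀ u v : V, G.Adj u v → ∃ t, u ∈ bag t ∧ v ∈ bag t
  connected : ∀ v : V, (TG.induce {t | v ∈ bag t}).Connected

/-- `G` has a tree decomposition of width at most `k`. -/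
def HasTD {V : Type} (G : SimpleGraph V) (k : ℕ) : Prop :=
  ∃ (T : Type) (TG : SimpleGraph T) (D : TreeDecomp G TG), ∀ t, (D.bag t).card ≤ k + 1

/-- The treewidth of a graph: the minimum width of a tree decomposition (`⊤` if none). -/
noncomputable def tw {V : Type} (G : SimpleGraph V) : ℕ∞ :=
  sInf {x : ℕ∞ | ∃ k : ℕ, x = k ∧ HasTD G k}

/-- The primal treewidth of a WCNF. -/
noncomputable def WCNF.tw (φ : WCNF) : ℕ∞ := _root_.tw (primalOf φ.clauses)

/-- The incidence treewidth of a WCNF. -/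
noncomputable def WCNF.itw (φ : WCNF) : ℕ∞ := _root_.tw (incOf φ.clauses)

/-- A (monotone) weighted CNF with integer weights. -/
structure ZWCNF where
  clauses : Finset Clause
  weight : Clause → ℤ

/-- Cost of an assignment for an integer-weighted CNF. -/
noncomputable def ZWCNF.costA (φ : ZWCNF) (β : ℕ → Bool) : ℤ :=
  ∑ c ∈ φ.clauses.filter (fun c => ¬ satClause β c), φ.weight c

/-- `v` is the minimum cost of `φ`. -/
def ZWCNF.IsMinCost (φ : ZWCNF) (v : ℤ) : Prop :=
  (∃ β, φ.costA β = v) ∧ ∀ β, v ≤ φ.costA β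

/-- A formula is monotone if every literal occurring in it is negative. -/
def ZWCNF.Mono (φ : ZWCNF) : Prop := ∀ c ∈ φ.clauses, ∀ l ∈ c, l.pos = false

noncomputable def ZWCNF.tw (φ : ZWCNF) : ℕ∞ := _root_.tw (primalOf φ.clauses)

noncomputable def ZWCNF.itw (φ : ZWCNF) : ℕ∞ := _root_.tw (incOf φ.clauses)

/-- A QUBO instance: `H(x) = Σ_i lin i * x_i + Σ_{i<j} quad i j * x_i x_j`
with integer weights supported on a finite set of variables. -/
structure QUBO where
  vars : Finset ℕ
  lin : ℕ → ℤ
  quad : ℕ → ℕ → ℤ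
  lin_supp : ∀ i, lin i ≠ 0 → i ∈ vars
  quad_supp : ∀ i j, quad i j ≠ 0 → i ∈ vars ∧ j ∈ vars
  quad_lt : ∀ i j, quad i j ≠ 0 → i < j

/-- Value of a Boolean, identifying `true` with `1` and `false` with `0`. -/
def bval (b : Bool) : ℤ := if b then 1 else 0

/-- Evaluation of a QUBO Hamiltonian on a `{0,1}`-assignment. -/
def QUBO.eval (H : QUBO) (x : ℕ → Bool) : ℤ :=
  (∑ i ∈ H.vars, H.lin i * bval (x i)) +
    ∑ i ∈ H.vars, ∑ j ∈ H.vars, H.quad i j * bval (x i) * bval (x j)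

/-- A ground state: an assignment minimizing `H`. -/
def QUBO.IsGround (H : QUBO) (x : ℕ → Bool) : Prop := ∀ y, H.eval x ≤ H.eval y

/-- `μ` is the minimum value of `H`. -/
def QUBO.IsMinVal (H : QUBO) (μ : ℤ) : Prop :=
  (∃ x, H.eval x = μ) ∧ ∀ x, μ ≤ H.eval x

/-- The primal graph of a QUBO: an edge `{i,j}` whenever the quadratic weight is nonzero. -/
def QUBO.primal (H : QUBO) : SimpleGraph ℕ :=
  SimpleGraph.fromRel (fun i j => H.quad i j ≠ 0)

/-- The incidence graph of a QUBO: bipartite graph on variables and nonzero terms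
(linear terms indexed by a variable, quadratic terms by a pair of variables). -/
def QUBO.inc (H : QUBO) : SimpleGraph (ℕ ⊕ (ℕ ⊕ ℕ × ℕ)) :=
  SimpleGraph.fromRel (fun a b =>
    (∃ i, a = Sum.inl i ∧ b = Sum.inr (Sum.inl i) ∧ H.lin i ≠ 0) ∨
    (∃ x i j, a = Sum.inl x ∧ b = Sum.inr (Sum.inr (i, j)) ∧ H.quad i j ≠ 0 ∧ (x = i ∨ x = j)))

noncomputable def QUBO.tw (H : QUBO) : ℕ∞ := _root_.tw H.primal

noncomputable def QUBO.itw (H : QUBO) : ℕ∞ := _root_.tw H.inc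

/-- An assignment satisfies an (unweighted) CNF if it satisfies every clause. -/
def satCNF (β : ℕ → Bool) (φ : Finset Clause) : Prop := ∀ c ∈ φ, satClause β c

/-- The weight of an assignment: the sum of weights of the variables set to true. -/
noncomputable def wOf (φ : Finset Clause) (w : ℕ → ℕ) (β : ℕ → Bool) : ℕ :=
  ∑ x ∈ (cnfVars φ).filter (fun x => β x = true), w x

/-- The satisfying assignments of a CNF, represented as the subsets of its variable set
consisting of the variables set to true. -/
noncomputable def satSets (φ : Finset Clause) : Finset (Finset ℕ) :=
  (cnfVars φ).powerset.filter (fun S => ∀ c ∈ φ, ∃ l ∈ c, ((l.var ∈ S) ↔ l.pos = true))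

/-- The number of satisfied clauses among the six clauses
`(ℓ₁ ∨ ℓ₂), (ℓ₁ ∨ ℓ₃), (¬ℓ₂ ∨ ¬ℓ₃), (α ∨ ¬ℓ₁), (¬α ∨ ℓ₂), (¬α ∨ ℓ₃)`. -/
def cnt6 (l1 l2 l3 a : Bool) : ℕ :=
  (if l1 || l2 then 1 else 0) + (if l1 || l3 then 1 else 0) +
  (if !l2 || !l3 then 1 else 0) + (if a || !l1 then 1 else 0) +
  (if !a || l2 then 1 else 0) + (if !a || l3 then 1 else 0)

/-- the maximum over `α` of the number of satisfied clauses among the six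
clauses equals 5 if `ℓ₁ ∨ ℓ₂ ∨ ℓ₃` holds and 4 otherwise. -/
theorem stmt4 (l1 l2 l3 : Bool) :
    max (cnt6 l1 l2 l3 false) (cnt6 l1 l2 l3 true) =
      if l1 || l2 || l3 then 5 else 4 := by
  cases l1 <;> cases l2 <;> cases l3 <;> decide
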